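/- arXiv:2007.16181 — 7 statements merged into one kernel-verified Lean document; each statement's English description precedes it below -/
import Mathlib

section
/- If a_1,...,a_n and b_1,...,b_n are distinct points of the unit disk with {a_i} ∩ {b_j} = ∅, then the matrix with entries 1/(1 - a_i·conj(b_j)) is invertible. -/
open Complex Polynomial Finset

/-- For pairwise distinct points `a i` and `b j` of the unit disk with the two families
disjoint, the matrix with entries `1/(1 - a i * conj (b j))` is invertible. -/
theorem szego_type_matrix_invertible {n : ℕ}
    (a b : Fin n → ℂ)
    (ha : ∀ i, ‖a i‖ < 1) (hb : ∀ j, ‖b j‖ < 1)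
    (hainj : Function.Injective a) (hbinj : Function.Injective b)
    (hdisj : ∀ i j, a i ≠ b j) :
    IsUnit (Matrix.of fun i j : Fin n => (1 - a i * (starRingEnd ℂ) (b j))⁻¹) := by
  rcases Nat.eq_zero_or_pos n with rfl | hn
  · rw [Matrix.isUnit_iff_isUnit_det, Matrix.det_fin_zero]; exact isUnit_one
  set β : Fin n → ℂ := fun j => (starRingEnd ℂ) (b j) with hβdef
  have hβinj : Function.Injective β := fun i j h => by
    apply hbinj
    simpa [hβdef] using congrArg (starRingEnd ℂ) h
  have hβabs : ∀ j, ‖β j‖ < 1 := fun j => by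
    simpa [hβdef] using hb j
  have hd : ∀ i j, 1 - a i * β j ≠ 0 := by
    intro i j h
    have h1 : a i * β j = 1 := by linear_combination -h
    have : ‖a i‖ * ‖β j‖ = 1 := by
      rw [← norm_mul, h1, norm_one]
    nlinarith [ha i, hβabs j, norm_nonneg (a i), norm_nonneg (β j)]
  rw [← Matrix.mulVec_injective_iff_isUnit]
  have key : ∀ c : Fin n → ℂ,
      (Matrix.of fun i j : Fin n => (1 - a i * (starRingEnd ℂ) (b j))⁻¹).mulVec c = 0 →
      c = 0 := by
    intro c hc
    have hc' : ∀ i, ∑ j, (1 - a i * β j)⁻¹ * c j = 0 := by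
      intro i
      have := congrFun hc i
      simpa [Matrix.mulVec, dotProduct, hβdef] using this
    -- the polynomial
    set P : ℂ[X] := ∑ j, C (c j) * ∏ k ∈ univ.erase j, (1 - C (β k) * X) with hP
    have hPeval : ∀ z : ℂ, P.eval z = ∑ j, c j * ∏ k ∈ univ.erase j, (1 - β k * z) := by
      intro z
      simp [hP, eval_finset_sum, eval_prod]
    have hPdeg : P.natDegree < n := by
      have hle : P.natDegree ≤ n - 1 := by
        apply Polynomial.natDegree_sum_le_of_forall_le
        intro j _
        refine (Polynomial.natDegree_mul_le).trans ?_
        rw [Polynomial.natDegree_C]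
        simp only [Nat.zero_add]
        refine (Polynomial.natDegree_prod_le _ _).trans ?_
        calc ∑ k ∈ univ.erase j, (1 - C (β k) * X).natDegree
            ≤ ∑ _k ∈ univ.erase j, 1 := by
              apply Finset.sum_le_sum
              intro k _
              refine (Polynomial.natDegree_sub_le _ _).trans ?_
              simp only [Polynomial.natDegree_one]
              refine max_le (Nat.zero_le _) ?_
              exact (Polynomial.natDegree_C_mul_le _ _).trans Polynomial.natDegree_X_le
          _ = n - 1 := by
              rw [Finset.sum_const, smul_eq_mul, mul_one,
                Finset.card_erase_of_mem (mem_univ j), Finset.card_univ, Fintype.card_fin]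
      omega
    have hProots : ∀ i, P.eval (a i) = 0 := by
      intro i
      rw [hPeval]
      have hsum : ∑ j, c j * ∏ k ∈ univ.erase j, (1 - β k * a i)
          = (∏ k, (1 - a i * β k)) * ∑ j, (1 - a i * β j)⁻¹ * c j := by
        rw [Finset.mul_sum]
        apply Finset.sum_congr rfl
        intro j _
        have hprod : ∏ k, (1 - a i * β k)
            = (∏ k ∈ univ.erase j, (1 - a i * β k)) * (1 - a i * β j) :=
          (Finset.prod_erase_mul _ _ (mem_univ j)).symm
        rw [hprod]
        have : ∀ k, 1 - β k * a i = 1 - a i * β k := fun k => by ring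
        simp_rw [this]
        field_simp [hd i j]
      rw [hsum, hc' i, mul_zero]
    have hP0 : P = 0 := by
      apply Polynomial.eq_zero_of_natDegree_lt_card_of_eval_eq_zero P hainj hProots
      simpa using hPdeg
    have hc0 : ∀ j, β j ≠ 0 → c j = 0 := by
      intro j hβj
      have h0 : P.eval (β j)⁻¹ = 0 := by rw [hP0]; simp
      rw [hPeval] at h0
      have hsingle : ∑ j', c j' * ∏ k ∈ univ.erase j', (1 - β k * (β j)⁻¹)
          = c j * ∏ k ∈ univ.erase j, (1 - β k * (β j)⁻¹) := by
        apply Finset.sum_eq_single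
        · intro j' _ hj'
          have hjmem : j ∈ univ.erase j' := Finset.mem_erase.mpr ⟨Ne.symm hj', mem_univ j⟩
          rw [Finset.prod_eq_zero hjmem, mul_zero]
          simp [hβj]
        · intro h; exact absurd (mem_univ j) h
      rw [hsingle] at h0
      have hne : ∏ k ∈ univ.erase j, (1 - β k * (β j)⁻¹) ≠ 0 := by
        apply Finset.prod_ne_zero_iff.mpr
        intro k hk hzero
        have : β k * (β j)⁻¹ = 1 := by linear_combination -hzero
        have hkj : β k = β j := by
          field_simp at this
          exact this
        exact (Finset.mem_erase.mp hk).1 (hβinj hkj)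
      exact (mul_eq_zero.mp h0).resolve_right hne
    funext j
    by_cases hβj : β j = 0
    · have h0 : P.eval 0 = 0 := by rw [hP0]; simp
      rw [hPeval] at h0
      simp only [mul_zero, sub_zero, Finset.prod_const_one, mul_one] at h0
      have : ∑ j', c j' = c j := by
        apply Finset.sum_eq_single
        · intro j' _ hj'
          apply hc0
          intro h
          exact hj' (hβinj (h.trans hβj.symm))
        · intro h; exact absurd (mem_univ j) h
      rw [this] at h0
      simpa using h0
    · simpa using hc0 j hβj
  intro x y hxy
  have h0 : (Matrix.of fun i j : Fin n => (1 - a i * (starRingEnd ℂ) (b j))⁻¹).mulVec (x - y) = 0 := by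
    rw [Matrix.mulVec_sub, hxy, sub_self]
  have := key _ h0
  exact sub_eq_zero.mp this
end

section
/- Let H be a reproducing kernel Hilbert space on a set X, and let A, B be disjoint finite subsets of X of the same cardinality n such that the kernel functions {k_w : w ∈ A ∪ B} are linearly independent. Then the n×n matrix (k_{b_i}(a_j)) is invertible if and only if Z_A ∩ Z_B^⊥ = {0} and Z_A^⊥ ∩ Z_B = {0}, where Z_S = {f ∈ H : f vanishes on S}. -/
/-!
Put `U = span {k_a : a ∈ A}` and `V = span {k_b : b ∈ B}`. Then `Z_A = Uᗮ`, `Z_B = Vᗮ`, and as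
`U`, `V` are finite dimensional the two conditions read `Uᗮ ⊓ V = ⊥` and `U ⊓ Vᗮ = ⊥`. The matrix
is the cross Gram matrix `(⟪k_{a_j}, k_{b_i}⟫)`: a row vector `c` lies in its left kernel exactly
when `∑ cᵢ k_{bᵢ} ∈ Uᗮ`, so by independence of the `k_b` it is singular iff `Uᗮ ⊓ V ≠ ⊥`. Its
conjugate transpose is the same matrix with `A` and `B` exchanged, which yields the second
condition.
-/

section
open Matrix Submodule Set
open scoped InnerProductSpace

variable {𝕜 E : Type*} [RCLike 𝕜] [NormedAddCommGroup E] [InnerProductSpace 𝕜 E]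

theorem Submodule.mem_orthogonal_span_range_iff {ι : Type*} {u : ι → E} {x : E} :
    x ∈ (span 𝕜 (range u))ᗮ ↔ ∀ i, ⟪u i, x⟫_𝕜 = 0 := by
  simp only [span_range_eq_iSup, ← iInf_orthogonal, mem_iInf,
    mem_orthogonal_singleton_iff_inner_right]

section
variable {ι : Type*} [Fintype ι]

theorem vecMul_inner_matrix_eq_zero_iff (u v : ι → E) (c : ι → 𝕜) :
    c ᵥ* of (fun i j => ⟪u j, v i⟫_𝕜) = 0 ↔
      Fintype.linearCombination 𝕜 v c ∈ (span 𝕜 (range u))ᗮ := by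
  simp only [funext_iff, vecMul, dotProduct, mem_orthogonal_span_range_iff,
    Fintype.linearCombination_apply, inner_sum, inner_smul_right, of_apply, Pi.zero_apply]

theorem det_inner_matrix_ne_zero_iff_orthogonal_inf_span [DecidableEq ι] (u : ι → E) {v : ι → E}
    (hv : LinearIndependent 𝕜 v) :
    (of fun i j => ⟪u j, v i⟫_𝕜).det ≠ 0 ↔
      (span 𝕜 (range u))ᗮ ⊓ span 𝕜 (range v) = ⊥ := by
  rw [ne_eq, ← exists_vecMul_eq_zero_iff, inf_comm, ← Fintype.range_linearCombination,
    ← map_comap_eq, ← map_bot (Fintype.linearCombination 𝕜 v),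
    (map_injective_of_injective hv.fintypeLinearCombination_injective).eq_iff, eq_bot_iff]
  simp only [not_exists, not_and', ne_eq, not_not, vecMul_inner_matrix_eq_zero_iff,
    SetLike.le_def, mem_comap, mem_bot]

theorem det_inner_matrix_ne_zero_iff_span_inf_orthogonal [DecidableEq ι] {u : ι → E}
    (hu : LinearIndependent 𝕜 u) (v : ι → E) :
    (of fun i j => ⟪u j, v i⟫_𝕜).det ≠ 0 ↔
      span 𝕜 (range u) ⊓ (span 𝕜 (range v))ᗮ = ⊥ := by
  have hswap : (of fun i j => ⟪v j, u i⟫_𝕜) = (of fun i j => ⟪u j, v i⟫_𝕜)ᴴ := by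
    ext i j
    simp
  rw [inf_comm, ← det_inner_matrix_ne_zero_iff_orthogonal_inf_span v hu, hswap,
    det_conjTranspose, star_ne_zero]
end

instance {K V ι : Type*} [DivisionRing K] [AddCommGroup V] [Module K V] [Finite ι] (v : ι → V) :
    FiniteDimensional K (span K (range v)) :=
  .span_of_finite K (finite_range v)

theorem iInf_ker_proj_comp_eq_orthogonal_span {H X ι : Type*} [NormedAddCommGroup H]
    [InnerProductSpace 𝕜 H] {ev : H →ₗ[𝕜] (X → 𝕜)} {kk : X → H}
    (hrep : ∀ (f : H) (w : X), ev f w = ⟪kk w, f⟫_𝕜) (s : ι → X) :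
    ⨅ j, LinearMap.ker ((LinearMap.proj (s j)).comp ev) =
      (span 𝕜 (range fun j => kk (s j)))ᗮ := by
  ext f
  simp only [mem_iInf, LinearMap.mem_ker, LinearMap.comp_apply, LinearMap.proj_apply, hrep,
    mem_orthogonal_span_range_iff]

end

theorem rkhs_kernel_matrix_invertible_iff_general
    {H : Type*} [NormedAddCommGroup H] [InnerProductSpace ℂ H]
    {X : Type*} (ev : H →ₗ[ℂ] (X → ℂ)) (kk : X → H)
    (hrep : ∀ (f : H) (w : X), ev f w = inner ℂ (kk w) f)
    {n : ℕ} (a b : Fin n → X)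
    (hli : LinearIndependent ℂ fun x : Fin n ⊕ Fin n => kk (Sum.elim a b x)) :
    (Matrix.of fun i j : Fin n => ev (kk (b i)) (a j)).det ≠ 0 ↔
      ((⨅ j : Fin n, LinearMap.ker ((LinearMap.proj (a j)).comp ev)) ⊓
          (⨅ i : Fin n, LinearMap.ker ((LinearMap.proj (b i)).comp ev))ᗮ = ⊥ ∧
        (⨅ j : Fin n, LinearMap.ker ((LinearMap.proj (a j)).comp ev))ᗮ ⊓
          (⨅ i : Fin n, LinearMap.ker ((LinearMap.proj (b i)).comp ev)) = ⊥) := by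
  have hlia : LinearIndependent ℂ fun j => kk (a j) := hli.comp Sum.inl Sum.inl_injective
  have hlib : LinearIndependent ℂ fun i => kk (b i) := hli.comp Sum.inr Sum.inr_injective
  have hdet_iff_left :=
    det_inner_matrix_ne_zero_iff_orthogonal_inf_span (fun j => kk (a j)) hlib
  have hdet_iff_right :=
    det_inner_matrix_ne_zero_iff_span_inf_orthogonal hlia (fun i => kk (b i))
  simp only [← hrep] at hdet_iff_left hdet_iff_right
  rw [iInf_ker_proj_comp_eq_orthogonal_span hrep, iInf_ker_proj_comp_eq_orthogonal_span hrep,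
    Submodule.orthogonal_orthogonal, Submodule.orthogonal_orthogonal]
  exact ⟨fun h => ⟨hdet_iff_left.1 h, hdet_iff_right.1 h⟩, fun h => hdet_iff_left.2 h.1⟩

/-- In a reproducing kernel Hilbert space on `X`, for disjoint families
`a b : Fin n → X` whose `2n` kernel functions are linearly independent, the matrix
`K i j = kk (b i) (a j)` is invertible iff `Z_A ⊓ Z_Bᗮ = ⊥` and `Z_Aᗮ ⊓ Z_B = ⊥`. -/
theorem rkhs_kernel_matrix_invertible_iff
    {H : Type*} [NormedAddCommGroup H] [InnerProductSpace ℂ H]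
    {X : Type*} (ev : H →ₗ[ℂ] (X → ℂ)) (kk : X → H)
    (hrep : ∀ (f : H) (w : X), ev f w = inner ℂ (kk w) f)
    {n : ℕ} (a b : Fin n → X)
    (hainj : Function.Injective a) (hbinj : Function.Injective b)
    (hdisj : ∀ i j, a i ≠ b j)
    (hli : LinearIndependent ℂ fun x : Fin n ⊕ Fin n => kk (Sum.elim a b x)) :
    (Matrix.of fun i j : Fin n => ev (kk (b i)) (a j)).det ≠ 0 ↔
      ((⨅ j : Fin n, LinearMap.ker ((LinearMap.proj (a j)).comp ev)) ⊓
          (⨅ i : Fin n, LinearMap.ker ((LinearMap.proj (b i)).comp ev))ᗮ = ⊥ ∧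
        (⨅ j : Fin n, LinearMap.ker ((LinearMap.proj (a j)).comp ev))ᗮ ⊓
          (⨅ i : Fin n, LinearMap.ker ((LinearMap.proj (b i)).comp ev)) = ⊥) :=
  rkhs_kernel_matrix_invertible_iff_general ev kk hrep a b hli
end

section
/- Let H be a reproducing kernel Hilbert space on X with all k_a nonzero and {k_a, k_b} linearly independent for a ≠ b. Define Γ(a,b) = arccos(|⟨k_a, k_b⟩|/(‖k_a‖·‖k_b‖)). Then for the orthogonal projections P_a, P_b onto Z_a = {f : f(a)=0} and Z_b = {f : f(b)=0}, one has ‖P_a - P_b‖ = sin(Γ(a,b)) = sqrt(1 - |⟨k_a,k_b⟩|²/(‖k_a‖²‖k_b‖²)). -/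
/-!
`Z_p = (ℂ ∙ k_p)ᗮ`, so `P_a - P_b = Q_b - Q_a` with `Q_p` the rank-one projection onto the unit
vector `u_p = k_p / ‖k_p‖`. For unit vectors `u`, `v` with `c = ⟪u, v⟫`, writing
`T x = ⟪v, x⟫ v - ⟪u, x⟫ u` in the orthogonal pair `u`, `e = v - c u` gives
`‖T x‖² = (1 - |c|²) |⟪u, x⟫|² + |⟪e, x⟫|²`. Since `e ⊥ u` and `‖e‖² = 1 - |c|²`, Cauchy–Schwarz
applied to `x - ⟪u, x⟫ u` bounds the last term by `(1 - |c|²) (‖x‖² - |⟪u, x⟫|²)`, so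
`‖T‖ ≤ √(1 - |c|²)`, with equality at `x = u`.
-/

open scoped InnerProductSpace

section RankOneProjection

variable {𝕜 E : Type*} [RCLike 𝕜] [NormedAddCommGroup E] [InnerProductSpace 𝕜 E] {u v : E}

theorem norm_sub_inner_smul_sq (hu : ‖u‖ = 1) (x : E) :
    ‖x - ⟪u, x⟫_𝕜 • u‖ ^ 2 = ‖x‖ ^ 2 - ‖⟪u, x⟫_𝕜‖ ^ 2 := by
  rw [@norm_sub_sq 𝕜, inner_smul_right, ← inner_conj_symm x u, RCLike.mul_conj, norm_smul, hu]
  norm_cast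
  ring

theorem inner_sub_inner_smul_self (hu : ‖u‖ = 1) (v : E) : ⟪v - ⟪u, v⟫_𝕜 • u, u⟫_𝕜 = 0 := by
  rw [inner_sub_left, inner_smul_left, inner_self_eq_norm_sq_to_K, hu, ← inner_conj_symm u v]
  simp

theorem norm_inner_smul_sub_inner_smul_sq (hu : ‖u‖ = 1) (hv : ‖v‖ = 1) (x : E) :
    ‖⟪v, x⟫_𝕜 • v - ⟪u, x⟫_𝕜 • u‖ ^ 2
      = (1 - ‖⟪u, v⟫_𝕜‖ ^ 2) * ‖⟪u, x⟫_𝕜‖ ^ 2 + ‖⟪v - ⟪u, v⟫_𝕜 • u, x⟫_𝕜‖ ^ 2 := by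
  rw [inner_sub_left, inner_smul_left, @norm_sub_sq 𝕜, @norm_sub_sq 𝕜 𝕜, inner_smul_left,
    inner_smul_right, norm_smul, norm_smul, norm_mul, RCLike.norm_conj, hu, hv,
    RCLike.inner_apply, ← inner_conj_symm u v]
  simp only [RCLike.conj_conj]
  ring_nf

theorem norm_inner_sub_inner_smul_sq_le (hu : ‖u‖ = 1) (hv : ‖v‖ = 1) (x : E) :
    ‖⟪v - ⟪u, v⟫_𝕜 • u, x⟫_𝕜‖ ^ 2 ≤ (1 - ‖⟪u, v⟫_𝕜‖ ^ 2) * (‖x‖ ^ 2 - ‖⟪u, x⟫_𝕜‖ ^ 2) := by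
  have hx : ⟪v - ⟪u, v⟫_𝕜 • u, x⟫_𝕜 = ⟪v - ⟪u, v⟫_𝕜 • u, x - ⟪u, x⟫_𝕜 • u⟫_𝕜 := by
    rw [inner_sub_right, inner_smul_right, inner_sub_inner_smul_self hu, mul_zero, sub_zero]
  have he : ‖v - ⟪u, v⟫_𝕜 • u‖ ^ 2 = 1 - ‖⟪u, v⟫_𝕜‖ ^ 2 := by
    rw [norm_sub_inner_smul_sq hu, hv, one_pow]
  rw [hx, ← he, ← norm_sub_inner_smul_sq hu x, ← mul_pow]
  gcongr
  exact norm_inner_le_norm _ _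

theorem norm_starProjection_sub_starProjection_of_norm_eq_one (hu : ‖u‖ = 1) (hv : ‖v‖ = 1) :
    ‖(𝕜 ∙ v).starProjection - (𝕜 ∙ u).starProjection‖ = √(1 - ‖⟪u, v⟫_𝕜‖ ^ 2) := by
  set T := (𝕜 ∙ v).starProjection - (𝕜 ∙ u).starProjection
  have hT (x : E) : ‖T x‖ ^ 2
      = (1 - ‖⟪u, v⟫_𝕜‖ ^ 2) * ‖⟪u, x⟫_𝕜‖ ^ 2 + ‖⟪v - ⟪u, v⟫_𝕜 • u, x⟫_𝕜‖ ^ 2 := by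
    rw [← norm_inner_smul_sub_inner_smul_sq hu hv, sub_apply,
      Submodule.starProjection_unit_singleton 𝕜 hu, Submodule.starProjection_unit_singleton 𝕜 hv]
  have hc : 0 ≤ 1 - ‖⟪u, v⟫_𝕜‖ ^ 2 := by
    have := norm_inner_le_norm (𝕜 := 𝕜) u v
    rw [hu, hv, one_mul] at this
    nlinarith [norm_nonneg ⟪u, v⟫_𝕜]
  refine le_antisymm (T.opNorm_le_bound (by positivity) fun x ↦ ?_) ?_
  · refine le_of_pow_le_pow_left₀ two_ne_zero (by positivity) ?_
    rw [hT, mul_pow, Real.sq_sqrt hc]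
    nlinarith [norm_inner_sub_inner_smul_sq_le (𝕜 := 𝕜) hu hv x]
  · have hTu : ‖T u‖ = √(1 - ‖⟪u, v⟫_𝕜‖ ^ 2) := by
      rw [← Real.sqrt_sq (norm_nonneg (T u)), hT]
      simp [inner_sub_inner_smul_self hu, hu]
    exact hTu ▸ T.unit_le_opNorm u hu.le

theorem norm_starProjection_sub_starProjection {x y : E} (hx : x ≠ 0) (hy : y ≠ 0) :
    ‖(𝕜 ∙ y).starProjection - (𝕜 ∙ x).starProjection‖
      = √(1 - ‖⟪x, y⟫_𝕜‖ ^ 2 / (‖x‖ ^ 2 * ‖y‖ ^ 2)) := by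
  have hspan {z : E} (hz : z ≠ 0) : 𝕜 ∙ ((‖z‖ : 𝕜)⁻¹ • z) = 𝕜 ∙ z :=
    Submodule.span_singleton_smul_eq (by simpa using hz) z
  have h := norm_starProjection_sub_starProjection_of_norm_eq_one (𝕜 := 𝕜)
    (norm_smul_inv_norm (𝕜 := 𝕜) hx) (norm_smul_inv_norm (𝕜 := 𝕜) hy)
  simp only [hspan hx, hspan hy, inner_smul_left, inner_smul_right] at h
  rw [h]
  congr 2
  simp only [map_inv₀, RCLike.conj_ofReal, norm_mul, norm_inv, norm_algebraMap', norm_norm, mul_pow,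
    inv_pow]
  field_simp

end RankOneProjection

theorem rkhs_projection_difference_norm_general
    {H : Type*} [NormedAddCommGroup H] [InnerProductSpace ℂ H]
    {X : Type*} (ev : H →ₗ[ℂ] (X → ℂ)) (kk : X → H)
    (hrep : ∀ (f : H) (w : X), ev f w = inner ℂ (kk w) f)
    (a b : X)
    (hka : kk a ≠ 0) (hkb : kk b ≠ 0)
    (Za Zb : Submodule ℂ H)
    (hZa : ∀ f : H, f ∈ Za ↔ ev f a = 0) (hZb : ∀ f : H, f ∈ Zb ↔ ev f b = 0)
    [Submodule.HasOrthogonalProjection Za] [Submodule.HasOrthogonalProjection Zb] :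
    ‖Za.subtypeL.comp (Submodule.orthogonalProjectionOnto Za) - Zb.subtypeL.comp (Submodule.orthogonalProjectionOnto Zb)‖
        = Real.sin (Real.arccos (‖(inner ℂ (kk a) (kk b) : ℂ)‖ / (‖kk a‖ * ‖kk b‖))) ∧
      Real.sin (Real.arccos (‖(inner ℂ (kk a) (kk b) : ℂ)‖ / (‖kk a‖ * ‖kk b‖)))
        = Real.sqrt (1 - ‖(inner ℂ (kk a) (kk b) : ℂ)‖^2 / (‖kk a‖^2 * ‖kk b‖^2)) := by
  have hZ_eq {Z : Submodule ℂ H} {p : X} (hmem : ∀ f, f ∈ Z ↔ ev f p = 0) : Z = (ℂ ∙ kk p)ᗮ := by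
    ext f
    rw [hmem, hrep, Submodule.mem_orthogonal_singleton_iff_inner_right]
  obtain rfl := hZ_eq hZa
  obtain rfl := hZ_eq hZb
  have hsin : Real.sin (Real.arccos (‖⟪kk a, kk b⟫_ℂ‖ / (‖kk a‖ * ‖kk b‖)))
      = √(1 - ‖⟪kk a, kk b⟫_ℂ‖ ^ 2 / (‖kk a‖ ^ 2 * ‖kk b‖ ^ 2)) := by
    rw [Real.sin_arccos, div_pow, mul_pow]
  refine ⟨?_, hsin⟩
  change ‖(ℂ ∙ kk a)ᗮ.starProjection - (ℂ ∙ kk b)ᗮ.starProjection‖ = _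
  rw [Submodule.starProjection_orthogonal, Submodule.starProjection_orthogonal,
    sub_sub_sub_cancel_left, hsin, norm_starProjection_sub_starProjection hka hkb]

/-- In a reproducing kernel Hilbert space, for `a ≠ b` with `k_a, k_b` nonzero and linearly
independent, the orthogonal projections `P_a`, `P_b` onto `Z_a = {f : f(a)=0}` and
`Z_b = {f : f(b)=0}` satisfy
`‖P_a - P_b‖ = sin (arccos (|⟨k_a,k_b⟩|/(‖k_a‖‖k_b‖))) = sqrt (1 - |⟨k_a,k_b⟩|²/(‖k_a‖²‖k_b‖²))`. -/
theorem rkhs_projection_difference_norm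
    {H : Type*} [NormedAddCommGroup H] [InnerProductSpace ℂ H] [CompleteSpace H]
    {X : Type*} (ev : H →ₗ[ℂ] (X → ℂ)) (kk : X → H)
    (hrep : ∀ (f : H) (w : X), ev f w = inner ℂ (kk w) f)
    (a b : X) (hab : a ≠ b)
    (hka : kk a ≠ 0) (hkb : kk b ≠ 0)
    (hli : LinearIndependent ℂ ![kk a, kk b])
    (Za Zb : Submodule ℂ H)
    (hZa : ∀ f : H, f ∈ Za ↔ ev f a = 0) (hZb : ∀ f : H, f ∈ Zb ↔ ev f b = 0)
    [Submodule.HasOrthogonalProjection Za] [Submodule.HasOrthogonalProjection Zb] :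
    ‖Za.subtypeL.comp (Submodule.orthogonalProjectionOnto Za) - Zb.subtypeL.comp (Submodule.orthogonalProjectionOnto Zb)‖
        = Real.sin (Real.arccos (‖(inner ℂ (kk a) (kk b) : ℂ)‖ / (‖kk a‖ * ‖kk b‖))) ∧
      Real.sin (Real.arccos (‖(inner ℂ (kk a) (kk b) : ℂ)‖ / (‖kk a‖ * ‖kk b‖)))
        = Real.sqrt (1 - ‖(inner ℂ (kk a) (kk b) : ℂ)‖^2 / (‖kk a‖^2 * ‖kk b‖^2)) :=
  rkhs_projection_difference_norm_general ev kk hrep a b hka hkb Za Zb hZa hZb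
end

section
/- The function δ(a,b) = sqrt(1 - |⟨k_a,k_b⟩|²/(‖k_a‖²·‖k_b‖²)) on X × X, where k_w are the kernel functions of a reproducing kernel Hilbert space with all k_w ≠ 0 and {k_a,k_b} linearly independent for a ≠ b, is a metric on X. -/
/-!
Write `Q_y` for the orthogonal projection onto `(𝕜 ∙ y)ᗮ`. By Pythagoras, `δ(a, b)` is
`‖Q_{k_b} ℓ_a‖`, the distance from the unit vector `ℓ_a` to the line through `k_b`. For the
triangle inequality split `ℓ_a = P ℓ_a + Q_{k_b} ℓ_a`, with `P` the projection onto that line: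
`Q_{k_c}` does not increase the norm of the second summand, and the first is a multiple of `k_b`
of norm at most `1`, so `Q_{k_c}` sends it to a vector of norm at most `δ(b, c)`.
-/

open Submodule

section

variable (𝕜 : Type*) {E : Type*} [RCLike 𝕜] [NormedAddCommGroup E] [InnerProductSpace 𝕜 E]

/-- Equals `0` when `x = 0`. -/
noncomputable def sinLineAngle (x y : E) : ℝ := ‖(𝕜 ∙ y)ᗮ.starProjection x‖ / ‖x‖

variable {𝕜}

theorem sinLineAngle_nonneg (x y : E) : 0 ≤ sinLineAngle 𝕜 x y := by
  unfold sinLineAngle; positivity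

theorem norm_starProjection_singleton (x y : E) :
    ‖(𝕜 ∙ y).starProjection x‖ = ‖(inner 𝕜 y x : 𝕜)‖ / ‖y‖ := by
  rw [starProjection_singleton, norm_smul, norm_div, RCLike.norm_ofReal, abs_sq]
  rcases eq_or_ne y 0 with rfl | hy
  · simp
  · field_simp [norm_ne_zero_iff.mpr hy]

theorem sinLineAngle_eq_sqrt {x : E} (hx : x ≠ 0) (y : E) :
    sinLineAngle 𝕜 x y =
      Real.sqrt (1 - ‖(inner 𝕜 x y : 𝕜)‖ ^ 2 / (‖x‖ ^ 2 * ‖y‖ ^ 2)) := by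
  have pythagoras := norm_sq_eq_add_norm_sq_starProjection x (𝕜 ∙ y)
  rw [norm_starProjection_singleton, norm_inner_symm, eq_comm, ← eq_sub_iff_add_eq'] at pythagoras
  rw [sinLineAngle, ← Real.sqrt_sq (div_nonneg (norm_nonneg _) (norm_nonneg x)), div_pow,
    pythagoras, mul_comm, ← div_div, ← div_pow, sub_div, div_self (by positivity)]

theorem norm_starProjection_orthogonal_of_mem_span {p y : E} (hp : p ∈ 𝕜 ∙ y) (z : E) :
    ‖(𝕜 ∙ z)ᗮ.starProjection p‖ = ‖p‖ * sinLineAngle 𝕜 y z := by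
  obtain ⟨c, rfl⟩ := mem_span_singleton.mp hp
  rcases eq_or_ne y 0 with rfl | hy
  · simp
  · rw [map_smul, norm_smul, norm_smul, sinLineAngle, mul_assoc,
      mul_div_cancel₀ _ (norm_ne_zero_iff.mpr hy)]

theorem sinLineAngle_triangle (x y z : E) :
    sinLineAngle 𝕜 x z ≤ sinLineAngle 𝕜 x y + sinLineAngle 𝕜 y z := by
  rcases eq_or_ne x 0 with rfl | hx
  · simpa [sinLineAngle] using sinLineAngle_nonneg (𝕜 := 𝕜) y z
  set P := (𝕜 ∙ y).starProjection
  set Q := (𝕜 ∙ y)ᗮ.starProjection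
  set R := (𝕜 ∙ z)ᗮ.starProjection
  have hnorm : ‖R x‖ ≤ ‖Q x‖ + ‖x‖ * sinLineAngle 𝕜 y z := calc
    ‖R x‖ = ‖R (Q x) + R (P x)‖ := by
      rw [← map_add, add_comm, starProjection_add_starProjection_orthogonal]
    _ ≤ ‖Q x‖ + ‖P x‖ * sinLineAngle 𝕜 y z := by
      grw [norm_add_le, norm_starProjection_apply_le,
        norm_starProjection_orthogonal_of_mem_span (starProjection_apply_mem _ x)]
    _ ≤ ‖Q x‖ + ‖x‖ * sinLineAngle 𝕜 y z := by
      gcongr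
      · exact sinLineAngle_nonneg (𝕜 := 𝕜) y z
      · exact norm_starProjection_apply_le _ x
  have hx' : 0 < ‖x‖ := norm_pos_iff.mpr hx
  rw [sinLineAngle, sinLineAngle, div_le_iff₀ hx', add_mul, div_mul_cancel₀ _ hx'.ne']
  linarith

theorem sinLineAngle_eq_zero_iff {x : E} (hx : x ≠ 0) (y : E) :
    sinLineAngle 𝕜 x y = 0 ↔ x ∈ 𝕜 ∙ y := by
  rw [sinLineAngle, div_eq_zero_iff, norm_eq_zero, norm_eq_zero, or_iff_left hx,
    starProjection_apply_eq_zero_iff, orthogonal_orthogonal]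

end

/-- In a reproducing kernel Hilbert space on `X` with all kernel functions nonzero and
`k_a, k_b` linearly independent for `a ≠ b`, the function
`δ(a,b) = sqrt (1 - |⟨k_a,k_b⟩|²/(‖k_a‖²‖k_b‖²))` is a metric on `X`. -/
theorem rkhs_delta_is_metric
    {H : Type*} [NormedAddCommGroup H] [InnerProductSpace ℂ H]
    {X : Type*} (kk : X → H)
    (hk0 : ∀ a, kk a ≠ 0)
    (hli : ∀ a b : X, a ≠ b → LinearIndependent ℂ ![kk a, kk b]) :
    let δ : X → X → ℝ := fun a b =>
      Real.sqrt (1 - ‖(inner ℂ (kk a) (kk b) : ℂ)‖^2 / (‖kk a‖^2 * ‖kk b‖^2))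
    (∀ a b : X, δ a b = 0 ↔ a = b) ∧
      (∀ a b : X, δ a b = δ b a) ∧
      (∀ a b c : X, δ a c ≤ δ a b + δ b c) := by
  intro δ
  have hδ (a b : X) : δ a b = sinLineAngle ℂ (kk a) (kk b) :=
    (sinLineAngle_eq_sqrt (hk0 a) (kk b)).symm
  refine ⟨fun a b => ?_, fun a b => ?_, fun a b c => ?_⟩
  · rw [hδ, sinLineAngle_eq_zero_iff (hk0 a), mem_span_singleton]
    refine ⟨fun ⟨c, hc⟩ => by_contra fun hab => ?_, fun hab => ⟨1, by rw [hab, one_smul]⟩⟩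
    exact (linearIndependent_fin2.mp (hli a b hab)).2 c hc
  · simp only [δ, norm_inner_symm, mul_comm]
  · simpa only [hδ] using sinLineAngle_triangle (kk a) (kk b) (kk c)
end

section
/- For the Bergman kernel k_w(z) = 1/(1 - conj(w)z)², the metric Γ(a,b) = arccos(|⟨k_a,k_b⟩|/(‖k_a‖‖k_b‖)) on the unit disk satisfies Γ(a,b) = 2·arcsin(ρ(a,b)/√2), where ρ(a,b) = |(a-b)/(1 - conj(a)b)| is the pseudo-hyperbolic distance. -/
/-!
The identity `|1 - āb|² - |a - b|² = (1 - |a|²)(1 - |b|²)` shows that the normalized Bergman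
kernel `|⟨k_a, k_b⟩| / (‖k_a‖ ‖k_b‖)` equals `1 - ρ(a,b)² = 1 - 2 (ρ(a,b)/√2)²`, and
`arccos (1 - 2 sin² θ) = 2θ` for `θ ∈ [0, π/2]`.
-/

open Complex ComplexConjugate

theorem Real.arccos_one_sub_two_mul_sq {x : ℝ} (hx₀ : 0 ≤ x) (hx₁ : x ≤ 1) :
    Real.arccos (1 - 2 * x ^ 2) = 2 * Real.arcsin x := by
  have hcos : Real.cos (2 * Real.arcsin x) = 1 - 2 * x ^ 2 := by
    rw [Real.cos_two_mul_eq_one_sub, Real.sin_arcsin (by linarith) hx₁]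
  rw [← hcos, Real.arccos_cos (by linarith [Real.arcsin_nonneg.2 hx₀])
    (by linarith [Real.arcsin_le_pi_div_two x])]

theorem Complex.norm_one_sub_conj_mul_sq_sub_norm_sub_sq (a b : ℂ) :
    ‖1 - conj a * b‖ ^ 2 - ‖a - b‖ ^ 2 = (1 - ‖a‖ ^ 2) * (1 - ‖b‖ ^ 2) := by
  simp only [Complex.sq_norm, normSq_apply, sub_re, sub_im, mul_re, mul_im, one_re, one_im,
    conj_re, conj_im]
  ring

noncomputable def pseudoHyperbolicDist (a b : ℂ) : ℝ := ‖(a - b) / (1 - conj a * b)‖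

theorem pseudoHyperbolicDist_nonneg (a b : ℂ) : 0 ≤ pseudoHyperbolicDist a b :=
  norm_nonneg _

theorem one_sub_pseudoHyperbolicDist_sq {a b : ℂ} (ha : ‖a‖ < 1) (hb : ‖b‖ < 1) :
    1 - pseudoHyperbolicDist a b ^ 2 =
      (1 - ‖a‖ ^ 2) * (1 - ‖b‖ ^ 2) / ‖1 - conj a * b‖ ^ 2 := by
  have hpos : 0 < (1 - ‖a‖ ^ 2) * (1 - ‖b‖ ^ 2) := by
    apply mul_pos <;> nlinarith [norm_nonneg a, norm_nonneg b]
  have hden : 0 < ‖1 - conj a * b‖ ^ 2 := by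
    nlinarith [norm_one_sub_conj_mul_sq_sub_norm_sub_sq a b, sq_nonneg ‖a - b‖]
  rw [pseudoHyperbolicDist, norm_div, div_pow, ← norm_one_sub_conj_mul_sq_sub_norm_sub_sq,
    sub_div, div_self hden.ne']

theorem pseudoHyperbolicDist_le_one {a b : ℂ} (ha : ‖a‖ < 1) (hb : ‖b‖ < 1) :
    pseudoHyperbolicDist a b ≤ 1 := by
  have h : 0 ≤ 1 - pseudoHyperbolicDist a b ^ 2 := by
    rw [one_sub_pseudoHyperbolicDist_sq ha hb]
    apply div_nonneg (mul_nonneg ?_ ?_) (sq_nonneg _) <;>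
      nlinarith [norm_nonneg a, norm_nonneg b]
  nlinarith [pseudoHyperbolicDist_nonneg a b]

/-- For the Bergman kernel `k_w(z) = 1/(1 - conj w * z)²`, the metric
`Γ(a,b) = arccos (|⟨k_a,k_b⟩|/(‖k_a‖‖k_b‖))` on the unit disk satisfies
`Γ(a,b) = 2 arcsin (ρ(a,b)/√2)` for the pseudo-hyperbolic distance `ρ`. -/
theorem bergman_Gamma_eq_two_arcsin
    (a b : ℂ) (ha : ‖a‖ < 1) (hb : ‖b‖ < 1) :
    Real.arccos (‖1 / (1 - (starRingEnd ℂ) a * b)^2‖ /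
        ((1 / (1 - (‖a‖)^2)) * (1 / (1 - (‖b‖)^2)))) =
      2 * Real.arcsin (‖(a - b) / (1 - (starRingEnd ℂ) a * b)‖ / Real.sqrt 2) := by
  change _ = 2 * Real.arcsin (pseudoHyperbolicDist a b / √2)
  have hcos : ‖1 / (1 - conj a * b) ^ 2‖ / ((1 / (1 - ‖a‖ ^ 2)) * (1 / (1 - ‖b‖ ^ 2)))
      = 1 - 2 * (pseudoHyperbolicDist a b / √2) ^ 2 := by
    rw [div_pow, Real.sq_sqrt zero_le_two, mul_div_cancel₀ _ two_ne_zero,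
      one_sub_pseudoHyperbolicDist_sq ha hb, norm_div, norm_one, norm_pow]
    field_simp
  have hρ : pseudoHyperbolicDist a b / √2 ≤ 1 := by
    rw [div_le_one (by positivity)]
    exact (pseudoHyperbolicDist_le_one ha hb).trans Real.one_lt_sqrt_two.le
  rw [hcos, Real.arccos_one_sub_two_mul_sq
    (div_nonneg (pseudoHyperbolicDist_nonneg a b) (Real.sqrt_nonneg 2)) hρ]
end

section
/- Let a_k ∈ D with |a_k| → 1, and set b_k = a_k + ε_k with ε_k > 0 and ε_k < dist(a_k, 𝕋)². Then the Blaschke factors a_k(z) = (conj(a_k)/|a_k|)·(a_k - z)/(1 - conj(a_k)z) and b_k(z) (similarly defined, assuming b_k ∈ D \ {0}) satisfy sup_{θ} |b_k(e^{iθ})/a_k(e^{iθ}) - 1| → 0 as k → ∞. -/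
open Complex Filter ComplexConjugate

/-!
The quotient of the Blaschke factors of `b = a + ε` and `a` at `z` on the unit circle is the
product of the ratio of their unimodular constants, `(b - z) / (a - z)` and
`(1 - conj a * z) / (1 - conj b * z)`. On the circle the last two differ from `1` by
`ε / ‖a - z‖` and `ε / ‖1 - conj b * z‖`, whose denominators are at least `d - ε` with
`d = 1 - ‖a‖`, and the first by at most `2 ε / ‖a‖`. As `ε < d²`, every factor is within
`2 d / ‖a‖` of `1`, so the quotient is within `(1 + 2 d / ‖a‖) ^ 3 - 1` of `1` uniformly in `z`,
and this bound tends to `0` as `‖a‖ → 1`.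
-/

theorem norm_mul_sub_one_le {R : Type*} [SeminormedRing R] {x y : R} {r s : ℝ}
    (hx : ‖x - 1‖ ≤ r) (hy : ‖y - 1‖ ≤ s) : ‖x * y - 1‖ ≤ (1 + r) * (1 + s) - 1 := by
  calc ‖x * y - 1‖ = ‖(x - 1) * (y - 1) + (x - 1) + (y - 1)‖ := by congr 1; noncomm_ring
    _ ≤ ‖x - 1‖ * ‖y - 1‖ + ‖x - 1‖ + ‖y - 1‖ :=
      norm_add₃_le.trans (by gcongr; exact norm_mul_le _ _)
    _ ≤ r * s + r + s := by gcongr; exact (norm_nonneg _).trans hx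
    _ = (1 + r) * (1 + s) - 1 := by ring

theorem Complex.norm_div_norm_sub_div_norm_le {x : ℂ} (hx : x ≠ 0) (y : ℂ) :
    ‖x / ‖x‖ - y / ‖y‖‖ ≤ 2 * ‖x - y‖ / ‖x‖ := by
  have hx' : (‖x‖ : ℂ) ≠ 0 := by exact_mod_cast norm_ne_zero_iff.2 hx
  have hsplit : x / ‖x‖ - y / ‖y‖ = (x - y) / ‖x‖ + y / ‖y‖ * ((‖y‖ - ‖x‖ : ℝ) / ‖x‖) := by
    rcases eq_or_ne y 0 with rfl | hy
    · simp
    · have : (‖y‖ : ℂ) ≠ 0 := by exact_mod_cast norm_ne_zero_iff.2 hy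
      push_cast; field_simp; ring
  have hunit : ‖y / ‖y‖‖ ≤ 1 := by
    rw [norm_div, norm_real, norm_norm]; exact div_self_le_one _
  have hnorms : ‖((‖y‖ - ‖x‖ : ℝ) : ℂ)‖ ≤ ‖x - y‖ := by
    rw [norm_real, Real.norm_eq_abs, norm_sub_rev x y]; exact abs_norm_sub_norm_le y x
  calc ‖x / ‖x‖ - y / ‖y‖‖
      ≤ ‖x - y‖ / ‖x‖ + 1 * (‖x - y‖ / ‖x‖) := by
        rw [hsplit]
        refine (norm_add_le _ _).trans ?_
        rw [norm_mul, norm_div (x - y), norm_div (((‖y‖ - ‖x‖ : ℝ)) : ℂ), norm_real, norm_norm]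
        gcongr
    _ = 2 * ‖x - y‖ / ‖x‖ := by ring

theorem norm_conj_div_norm_div_sub_one_le {a : ℂ} (ha : a ≠ 0) (b : ℂ) :
    ‖conj b / ‖b‖ / (conj a / ‖a‖) - 1‖ ≤ 2 * ‖a - b‖ / ‖a‖ := by
  have hunit : ‖conj a / ‖a‖‖ = 1 := by
    rw [norm_div, norm_conj, norm_real, norm_norm, div_self (norm_ne_zero_iff.2 ha)]
  rw [div_sub_one (norm_ne_zero_iff.1 (hunit.trans_ne one_ne_zero)), norm_div, hunit, div_one,
    norm_sub_rev]
  simpa [← map_sub] using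
    norm_div_norm_sub_div_norm_le ((map_ne_zero (starRingEnd ℂ)).2 ha) (conj b)

section UnitCircle

variable {z : ℂ}

theorem one_sub_norm_le_norm_sub (hz : ‖z‖ = 1) (a : ℂ) : 1 - ‖a‖ ≤ ‖a - z‖ := by
  simpa [hz, norm_sub_rev z a] using norm_sub_norm_le z a

theorem one_sub_norm_le_norm_one_sub_conj_mul (hz : ‖z‖ = 1) (a : ℂ) :
    1 - ‖a‖ ≤ ‖1 - conj a * z‖ := by
  simpa [hz] using norm_sub_norm_le 1 (conj a * z)

theorem norm_sub_div_sub_sub_one_le (hz : ‖z‖ = 1) {a : ℂ} (ha : ‖a‖ < 1) (b : ℂ) :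
    ‖(b - z) / (a - z) - 1‖ ≤ ‖b - a‖ / (1 - ‖a‖) := by
  have hpos : 0 < 1 - ‖a‖ := by linarith
  have hdist := one_sub_norm_le_norm_sub hz a
  rw [div_sub_one (norm_pos_iff.1 (hpos.trans_le hdist)), sub_sub_sub_cancel_right, norm_div]
  gcongr

theorem norm_one_sub_conj_mul_div_sub_one_le (hz : ‖z‖ = 1) (a : ℂ) {b : ℂ} (hb : ‖b‖ < 1) :
    ‖(1 - conj a * z) / (1 - conj b * z) - 1‖ ≤ ‖b - a‖ / (1 - ‖b‖) := by
  have hpos : 0 < 1 - ‖b‖ := by linarith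
  have hdist := one_sub_norm_le_norm_one_sub_conj_mul hz b
  rw [div_sub_one (norm_pos_iff.1 (hpos.trans_le hdist)), norm_div,
    show 1 - conj a * z - (1 - conj b * z) = conj (b - a) * z by rw [map_sub]; ring,
    norm_mul, norm_conj, hz, mul_one]
  gcongr

end UnitCircle

noncomputable def blaschkeFactor (a z : ℂ) : ℂ :=
  conj a / ‖a‖ * ((a - z) / (1 - conj a * z))

theorem blaschkeFactor_div_blaschkeFactor (a b z : ℂ) :
    blaschkeFactor b z / blaschkeFactor a z =
      conj b / ‖b‖ / (conj a / ‖a‖) * ((b - z) / (a - z)) *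
        ((1 - conj a * z) / (1 - conj b * z)) := by
  simp only [blaschkeFactor, div_eq_mul_inv, mul_inv, inv_inv]; ring

theorem norm_blaschkeFactor_add_div_sub_one_le {a z : ℂ} {ε : ℝ} (hz : ‖z‖ = 1) (ha0 : a ≠ 0)
    (ha : ‖a‖ < 1) (hε : 0 < ε) (hεlt : ε < (1 - ‖a‖) ^ 2) :
    ‖blaschkeFactor (a + ε) z / blaschkeFactor a z - 1‖ ≤ (1 + 2 * (1 - ‖a‖) / ‖a‖) ^ 3 - 1 := by
  set d := 1 - ‖a‖ with hd_def
  have hnorm_a : 0 < ‖a‖ := norm_pos_iff.2 ha0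
  have hd : 0 < d := by linarith
  have hεd : ε < d := hεlt.trans_le (by nlinarith)
  have hdist : ‖a + ε - a‖ = ε := by simp [abs_of_pos hε]
  have hnorm_b : ‖a + ε‖ ≤ ‖a‖ + ε := by simpa [abs_of_pos hε] using norm_add_le a ε
  set r := 2 * d / ‖a‖ with hr
  have hdr : d / ‖a‖ ≤ r := by rw [hr]; gcongr; linarith
  have h₁ : ‖conj (a + ε) / ‖a + ε‖ / (conj a / ‖a‖) - 1‖ ≤ r := by
    refine (norm_conj_div_norm_div_sub_one_le ha0 _).trans ?_
    rw [norm_sub_rev, hdist, hr]; gcongr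
  have h₂ : ‖(a + ε - z) / (a - z) - 1‖ ≤ r := by
    refine (norm_sub_div_sub_sub_one_le hz ha _).trans ?_
    rw [hdist]
    calc ε / d ≤ d := by rw [div_le_iff₀ hd]; nlinarith
      _ ≤ d / ‖a‖ := le_div_self hd.le hnorm_a ha.le
      _ ≤ r := hdr
  have h₃ : ‖(1 - conj a * z) / (1 - conj (a + ε) * z) - 1‖ ≤ r := by
    refine (norm_one_sub_conj_mul_div_sub_one_le hz a (by linarith)).trans ?_
    rw [hdist]
    calc ε / (1 - ‖a + ε‖) ≤ ε / (d - ε) :=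
        div_le_div_of_nonneg_left hε.le (by linarith) (by linarith)
      _ ≤ d / ‖a‖ := by
        rw [div_le_div_iff₀ (by linarith) hnorm_a, show ‖a‖ = 1 - d by linarith]; nlinarith
      _ ≤ r := hdr
  rw [blaschkeFactor_div_blaschkeFactor]
  calc _ ≤ (1 + ((1 + r) * (1 + r) - 1)) * (1 + r) - 1 :=
        norm_mul_sub_one_le (norm_mul_sub_one_le h₁ h₂) h₃
    _ = (1 + r) ^ 3 - 1 := by ring

theorem blaschke_factor_quotient_uniformly_one_general
    (a : ℕ → ℂ) (ε : ℕ → ℝ) (b : ℕ → ℂ)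
    (ha : ∀ k, ‖a k‖ < 1) (ha0 : ∀ k, a k ≠ 0)
    (habs : Tendsto (fun k => ‖a k‖) atTop (nhds 1))
    (hε : ∀ k, 0 < ε k) (hεlt : ∀ k, ε k < (1 - ‖a k‖)^2)
    (hbdef : ∀ k, b k = a k + (ε k : ℂ)) :
    ∀ δ : ℝ, 0 < δ → ∃ N : ℕ, ∀ k ≥ N, ∀ θ : ℝ,
      ‖
        (((starRingEnd ℂ) (b k) / ‖b k‖) *
            ((b k - Complex.exp (θ * Complex.I)) /
              (1 - (starRingEnd ℂ) (b k) * Complex.exp (θ * Complex.I)))) /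
          (((starRingEnd ℂ) (a k) / ‖a k‖) *
            ((a k - Complex.exp (θ * Complex.I)) /
              (1 - (starRingEnd ℂ) (a k) * Complex.exp (θ * Complex.I)))) - 1‖ < δ := by
  intro δ hδ
  obtain rfl : b = fun k => a k + (ε k : ℂ) := funext hbdef
  have hbound : Tendsto (fun k => (1 + 2 * (1 - ‖a k‖) / ‖a k‖) ^ 3 - 1) atTop (nhds 0) := by
    simpa using ((((habs.const_sub 1).const_mul 2).div habs one_ne_zero).const_add 1
      |>.pow 3).sub_const 1
  obtain ⟨N, hN⟩ := eventually_atTop.1 (hbound.eventually (gt_mem_nhds hδ))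
  exact ⟨N, fun k hk θ => (norm_blaschkeFactor_add_div_sub_one_le (norm_exp_ofReal_mul_I θ)
    (ha0 k) (ha k) (hε k) (hεlt k)).trans_lt (hN k hk)⟩

/-- If `a k` are points of the punctured unit disk with `|a k| → 1` and
`b k = a k + ε k` with `0 < ε k < dist(a k, 𝕋)²` and `b k` also in the punctured disk, then
the quotients of the corresponding Blaschke factors tend to `1` uniformly on the circle. -/
theorem blaschke_factor_quotient_uniformly_one
    (a : ℕ → ℂ) (ε : ℕ → ℝ) (b : ℕ → ℂ)
    (ha : ∀ k, ‖a k‖ < 1) (ha0 : ∀ k, a k ≠ 0)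
    (habs : Tendsto (fun k => ‖a k‖) atTop (nhds 1))
    (hε : ∀ k, 0 < ε k) (hεlt : ∀ k, ε k < (1 - ‖a k‖)^2)
    (hbdef : ∀ k, b k = a k + (ε k : ℂ))
    (hb : ∀ k, ‖b k‖ < 1) (hb0 : ∀ k, b k ≠ 0) :
    ∀ δ : ℝ, 0 < δ → ∃ N : ℕ, ∀ k ≥ N, ∀ θ : ℝ,
      ‖
        (((starRingEnd ℂ) (b k) / ‖b k‖) *
            ((b k - Complex.exp (θ * Complex.I)) /
              (1 - (starRingEnd ℂ) (b k) * Complex.exp (θ * Complex.I)))) /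
          (((starRingEnd ℂ) (a k) / ‖a k‖) *
            ((a k - Complex.exp (θ * Complex.I)) /
              (1 - (starRingEnd ℂ) (a k) * Complex.exp (θ * Complex.I)))) - 1‖ < δ :=
  blaschke_factor_quotient_uniformly_one_general a ε b ha ha0 habs hε hεlt hbdef
end

section
/- Let P and Q be orthogonal projections on a Hilbert space acting in generic position on a 2-dimensional space, with P = [[0,0],[0,1]] and Q = [[1-|γ|², γ√(1-|γ|²)],[conj(γ)√(1-|γ|²), |γ|²]] in some orthonormal basis, where γ = e^{iθ}cos(x) with 0 < x < π/2. Then the self-adjoint matrix X = [[0, -ix e^{iθ}],[ix e^{-iθ}, 0]] satisfies ‖X‖ = x, X is codiagonal with respect to P (PXP = (1-P)X(1-P) = 0), and e^{iX} P e^{-iX} = Q. -/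
/-!
Write `X = -i x J` with `J = [[0, e^{iθ}], [-e^{-iθ}, 0]]`. Since `J² = -1` and `J* = -J`,
the matrix `J` is unitary, which gives `‖X‖ = x`; and `a + bi ↦ a + bJ` is a continuous
`ℝ`-algebra map `ℂ → M₂(ℂ)`, which intertwines the exponentials, so
`e^{iX} = e^{xJ} = cos x + (sin x) J`. Conjugating `P` by this rotation gives `Q`, because
`|γ| = cos x` and `√(1 - |γ|²) = sin x` for `0 < x < π/2`.
-/

open Complex

theorem NormedSpace.exp_real_smul_of_mul_self_eq_neg_one {A : Type*} [NormedRing A]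
    [NormedAlgebra ℝ A] {J : A} (hJ : J * J = -1) (t : ℝ) :
    NormedSpace.exp (t • J) = Real.cos t • 1 + Real.sin t • J := by
  set φ := Complex.liftAux J hJ
  have hφ : Continuous φ := φ.toLinearMap.continuous_of_finiteDimensional
  calc NormedSpace.exp (t • J) = NormedSpace.exp (φ (t * I)) := by simp [φ, liftAux_apply]
    _ = φ (Complex.exp (t * I)) := by
      rw [Complex.exp_eq_exp_ℂ, NormedSpace.map_exp_of_mem_ball (𝕂 := ℝ) φ hφ]
      rw [NormedSpace.expSeries_radius_eq_top]
      exact edist_lt_top _ _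
    _ = _ := by
      rw [liftAux_apply, exp_ofReal_mul_I_re, exp_ofReal_mul_I_im,
        Algebra.algebraMap_eq_smul_one]

theorem mem_unitary_of_star_eq_neg_of_mul_self_eq_neg_one {A : Type*} [Ring A] [StarRing A]
    {J : A} (hstar : star J = -J) (hJ : J * J = -1) : J ∈ unitary A := by
  rw [Unitary.mem_iff, hstar, neg_mul, mul_neg, hJ, neg_neg, and_self]

theorem Complex.exp_neg_ofReal_mul_I (θ : ℝ) :
    Complex.exp (-θ * I) = (starRingEnd ℂ) (Complex.exp (θ * I)) := by
  rw [← Complex.exp_conj, map_mul, conj_ofReal, conj_I, neg_mul, mul_neg]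

theorem Complex.exp_mul_exp_neg (z : ℂ) : Complex.exp z * Complex.exp (-z) = 1 := by
  rw [← Complex.exp_add, add_neg_cancel, Complex.exp_zero]

namespace Matrix

noncomputable def rotationGenerator (θ : ℝ) : Matrix (Fin 2) (Fin 2) ℂ :=
  !![0, Complex.exp (θ * I); -Complex.exp (-θ * I), 0]

theorem rotationGenerator_mul_self (θ : ℝ) :
    rotationGenerator θ * rotationGenerator θ = -1 := by
  simp [rotationGenerator, one_fin_two, Complex.exp_mul_exp_neg, mul_comm (cexp (-(θ * I)))]

theorem star_rotationGenerator (θ : ℝ) :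
    star (rotationGenerator θ) = -rotationGenerator θ := by
  ext i j
  fin_cases i <;> fin_cases j <;> simp [rotationGenerator, ← Complex.exp_conj]

open scoped Matrix.Norms.L2Operator

theorem norm_rotationGenerator (θ : ℝ) : ‖rotationGenerator θ‖ = 1 :=
  CStarRing.norm_of_mem_unitary <| mem_unitary_of_star_eq_neg_of_mul_self_eq_neg_one
    (star_rotationGenerator θ) (rotationGenerator_mul_self θ)

theorem exp_smul_rotationGenerator (t θ : ℝ) :
    NormedSpace.exp (t • rotationGenerator θ) =
      !![(Real.cos t : ℂ), Real.sin t * Complex.exp (θ * I);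
        -(Real.sin t * Complex.exp (-θ * I)), Real.cos t] := by
  rw [NormedSpace.exp_real_smul_of_mul_self_eq_neg_one (rotationGenerator_mul_self θ)]
  ext i j
  fin_cases i <;> fin_cases j <;> simp [rotationGenerator, Complex.real_smul]

theorem exp_smul_rotationGenerator_mul_mul_exp_neg (t θ : ℝ) :
    NormedSpace.exp (t • rotationGenerator θ) * !![0, 0; 0, 1] *
        NormedSpace.exp (-(t • rotationGenerator θ)) =
      !![(Real.sin t ^ 2 : ℂ), Real.sin t * Real.cos t * Complex.exp (θ * I);
        Real.sin t * Real.cos t * Complex.exp (-θ * I), (Real.cos t ^ 2 : ℂ)] := by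
  have he := Complex.exp_mul_exp_neg (θ * I)
  rw [← neg_smul, exp_smul_rotationGenerator, exp_smul_rotationGenerator,
    mul_fin_two, mul_fin_two]
  simp only [Real.cos_neg, Real.sin_neg, ofReal_neg, mul_zero, zero_mul, add_zero, zero_add,
    mul_one, neg_mul, mul_neg, neg_neg, EmbeddingLike.apply_eq_iff_eq, vecCons_inj, and_true]
  refine ⟨⟨?_, by ring⟩, by ring, by ring⟩
  linear_combination (Real.sin t ^ 2 : ℂ) * he

end Matrix

open scoped Matrix.Norms.L2Operator in
/-- For `γ = e^{iθ} cos x` with `0 < x < π/2`, the projections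
`P = [[0,0],[0,1]]` and `Q = [[1-|γ|², γ√(1-|γ|²)],[conj γ √(1-|γ|²), |γ|²]]` are conjugate
by `e^{iX}` where `X = [[0, -ix e^{iθ}],[ix e^{-iθ}, 0]]`; moreover `‖X‖ = x` (operator norm)
and `X` is codiagonal with respect to `P`. -/
theorem two_by_two_geodesic_exponent
    (θ x : ℝ) (hx0 : 0 < x) (hx : x < Real.pi / 2)
    (γ : ℂ) (hγ : γ = Complex.exp (θ * Complex.I) * Real.cos x)
    (P Q X : Matrix (Fin 2) (Fin 2) ℂ)
    (hP : P = !![0, 0; 0, 1])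
    (hQ : Q = !![((1 - (‖γ‖)^2 : ℝ) : ℂ), γ * (Real.sqrt (1 - (‖γ‖)^2) : ℝ);
        (starRingEnd ℂ) γ * (Real.sqrt (1 - (‖γ‖)^2) : ℝ), (((‖γ‖)^2 : ℝ) : ℂ)])
    (hX : X = !![0, -Complex.I * (x : ℂ) * Complex.exp (θ * Complex.I);
        Complex.I * (x : ℂ) * Complex.exp (-θ * Complex.I), 0]) :
    ‖Matrix.toEuclideanCLM (𝕜 := ℂ) X‖ = x ∧
      P * X * P = 0 ∧ (1 - P) * X * (1 - P) = 0 ∧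
      NormedSpace.exp (Complex.I • X) * P * NormedSpace.exp (-(Complex.I • X)) = Q := by
  have hcos : 0 < Real.cos x := Real.cos_pos_of_mem_Ioo ⟨by linarith [Real.pi_pos], hx⟩
  have hsin : 0 < Real.sin x := Real.sin_pos_of_pos_of_lt_pi hx0 (by linarith)
  have hX_eq : X = (-(I * x)) • Matrix.rotationGenerator θ := by
    rw [hX, Matrix.rotationGenerator]
    ext i j
    fin_cases i <;> fin_cases j <;> simp
  have hIX_eq : I • X = x • Matrix.rotationGenerator θ := by
    rw [hX_eq, smul_smul, ← Complex.coe_smul]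
    congr 1
    linear_combination (-(x : ℂ)) * I_mul_I
  have hnormγ : ‖γ‖ = Real.cos x := by
    rw [hγ, norm_mul, norm_exp_ofReal_mul_I, Complex.norm_real, Real.norm_of_nonneg hcos.le,
      one_mul]
  have hsqrt : √(1 - ‖γ‖ ^ 2) = Real.sin x := by
    rw [hnormγ, ← Real.sin_sq, Real.sqrt_sq hsin.le]
  refine ⟨?_, ?_, ?_, ?_⟩
  · rw [← Matrix.cstar_norm_def, hX_eq, norm_smul, Matrix.norm_rotationGenerator]
    simp [hx0.le]
  · ext i j
    fin_cases i <;> fin_cases j <;> simp [hP, hX]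
  · ext i j
    fin_cases i <;> fin_cases j <;> simp [hP, hX, Matrix.one_fin_two]
  · rw [hIX_eq, hP, Matrix.exp_smul_rotationGenerator_mul_mul_exp_neg, hQ, hsqrt, hnormγ,
      ← Real.sin_sq, hγ, map_mul, conj_ofReal, ← exp_neg_ofReal_mul_I]
    ext i j
    fin_cases i <;> fin_cases j <;> simp <;> ring
end
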